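/- arXiv:1708.03581 — 3 statements merged into one kernel-verified Lean document; each statement's English description precedes it below -/
import Mathlib

section
/- Let ℋ be a finite-dimensional complex Hilbert space, H ∈ ℒ(ℋ) self-adjoint, σ_* ⊆ σ(H) a subset of its eigenvalues with spectral projection P_*, and assume g := dist(σ_*, σ(H)∖σ_*) > 0. Let g > g̃ > 0 and let 𝓘(A) := ∫_ℝ 𝒲_{g,g̃}(s) e^{iHs} A e^{−iHs} ds. Then: (i) 𝓘 maps the space 𝒜^{OD} := {A ∈ ℒ(ℋ) : A = P_* A P_*^⊥ + P_*^⊥ A P_*} of off-diagonal operators into itself, and on 𝒜^{OD} it is the inverse of −i·ad_H, i.e. for every A ∈ 𝒜^{OD} one has 𝓘(A) ∈ 𝒜^{OD} and [H, 𝓘(A)] = iA; (ii) if moreover diam(σ_*) ≤ g̃, then P_* 𝓘(A) P_* = 0 for every A ∈ ℒ(ℋ). -/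
/-!
In an orthonormal eigenbasis `b` of `H` with eigenvalues `e`, the Heisenberg evolution multiplies
the matrix entry `⟪b j, A (b i)⟫` by `exp (i (e j - e i) u)`, so `𝓘` acts entrywise as the
Fourier multiplier `Ŵ (e j - e i)` (`fourierWeight`), while `[H, ·]` multiplies it by
`e j - e i`. Nonzero entries of an off-diagonal `A` couple eigenvalues on opposite sides of the
gap, where `Ŵ ω = i / ω`; entries of the block `P · P` couple two eigenvalues in `σ_*`, at
distance at most `g̃`, where `Ŵ` vanishes.
-/

open ContinuousLinearMap MeasureTheory

noncomputable section

variable {ℋ : Type*} [NormedAddCommGroup ℋ] [InnerProductSpace ℂ ℋ] [FiniteDimensional ℂ ℋ]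

/-- Heisenberg evolution `e^{iHu} A e^{-iHu}`. -/
def heis (H A : ℋ →L[ℂ] ℋ) (u : ℝ) : ℋ →L[ℂ] ℋ :=
  NormedSpace.exp ((Complex.I * u) • H) * A * NormedSpace.exp ((-Complex.I * u) • H)

/-- The quasi-local inverse of the Liouvillian, `𝓘(A) = ∫ W(s) e^{iHs} A e^{-iHs} ds`. -/
def invLiou (W : ℝ → ℝ) (H A : ℋ →L[ℂ] ℋ) : ℋ →L[ℂ] ℋ :=
  ∫ u : ℝ, W u • heis H A u

/-- The defining properties of the weight function `𝒲_{g,g̃}`: odd, integrable, with rapid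
decay, whose Fourier transform is `i/ω` for `|ω| ≥ g` and `0` for `|ω| ≤ g̃`. -/
def IsW (W : ℝ → ℝ) (g gt : ℝ) : Prop :=
  (∀ u : ℝ, W (-u) = -W u) ∧ Integrable W ∧
  (∀ n : ℕ, ∃ C : ℝ, ∀ u : ℝ, 1 ≤ |u| → |u| ^ n * |W u| ≤ C) ∧
  (∀ ω : ℝ, g ≤ |ω| →
    (∫ u : ℝ, (W u : ℂ) * Complex.exp (Complex.I * ω * u)) = Complex.I / ω) ∧
  (∀ ω : ℝ, |ω| ≤ gt → (∫ u : ℝ, (W u : ℂ) * Complex.exp (Complex.I * ω * u)) = 0)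

open scoped InnerProductSpace

theorem exp_apply_of_apply_eq_smul {F : Type*} [NormedAddCommGroup F] [NormedSpace ℂ F]
    [CompleteSpace F] {T : F →L[ℂ] F} {μ : ℂ} {v : F} (hv : T v = μ • v) :
    NormedSpace.exp T v = Complex.exp μ • v := by
  have hpow : ∀ n : ℕ, (T ^ n) v = μ ^ n • v := by
    intro n
    induction n with
    | zero => simp
    | succ n ih => rw [pow_succ, mul_apply_eq_comp, hv, map_smul, ih, smul_smul, pow_succ']
  have hT := (apply ℂ F v).hasSum (NormedSpace.exp_series_hasSum_exp' (𝕂 := ℂ) T)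
  have hμ := (NormedSpace.exp_series_hasSum_exp' (𝕂 := ℂ) μ).smul_const v
  rw [← Complex.exp_eq_exp_ℂ] at hμ
  refine hT.unique ?_
  simpa [hpow, smul_smul] using hμ

section SelfAdjoint

variable {E : Type*} [NormedAddCommGroup E] [InnerProductSpace ℂ E]

theorem ContinuousLinearMap.ext_inner_basis {ι : Type*} (b : Module.Basis ι ℂ E) {S T : E →L[ℂ] E}
    (h : ∀ i j, ⟪b j, S (b i)⟫_ℂ = ⟪b j, T (b i)⟫_ℂ) : S = T :=
  coe_injective (b.ext fun i => InnerProductSpace.ext_inner_left_basis b (h i))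

theorem mul_mul_eq_zero_iff_of_basis [CompleteSpace E] {ι : Type*} (b : Module.Basis ι ℂ E)
    {s : Set ι} {Q : E →L[ℂ] E} (hQ : IsSelfAdjoint Q) (hQs : ∀ i ∈ s, Q (b i) = b i)
    (hQsc : ∀ i ∉ s, Q (b i) = 0) (X : E →L[ℂ] E) :
    Q * X * Q = 0 ↔ ∀ i ∈ s, ∀ j ∈ s, ⟪b j, X (b i)⟫_ℂ = 0 := by
  have hcompr : ∀ i j, ⟪b j, (Q * X * Q) (b i)⟫_ℂ = ⟪Q (b j), X (Q (b i))⟫_ℂ := fun i j =>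
    (hQ.isSymmetric (b j) (X (Q (b i)))).symm
  constructor
  · rintro h i hi j hj
    simpa only [hcompr, hQs i hi, hQs j hj, zero_apply, inner_zero_right] using
      congrArg (fun T => ⟪b j, T (b i)⟫_ℂ) h
  · intro h
    refine ext_inner_basis b fun i j => ?_
    rw [hcompr, zero_apply, inner_zero_right]
    by_cases hi : i ∈ s
    · by_cases hj : j ∈ s
      · rw [hQs i hi, hQs j hj, h i hi j hj]
      · rw [hQsc j hj, inner_zero_left]
    · rw [hQsc i hi, map_zero, inner_zero_right]

theorem one_sub_mul_mul_eq_zero_iff_of_basis [CompleteSpace E] {ι : Type*}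
    (b : Module.Basis ι ℂ E) {s : Set ι} {Q : E →L[ℂ] E} (hQ : IsSelfAdjoint Q)
    (hQs : ∀ i ∈ s, Q (b i) = b i) (hQsc : ∀ i ∉ s, Q (b i) = 0) (X : E →L[ℂ] E) :
    (1 - Q) * X * (1 - Q) = 0 ↔ ∀ i ∉ s, ∀ j ∉ s, ⟪b j, X (b i)⟫_ℂ = 0 :=
  mul_mul_eq_zero_iff_of_basis b ((IsSelfAdjoint.one _).sub hQ) (s := sᶜ)
    (fun i hi => by simp [hQsc i hi]) (fun i hi => by simp [hQs i (not_not.mp hi)]) X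

theorem mem_iff_notMem_of_inner_ne_zero [CompleteSpace E] {ι : Type*} (b : Module.Basis ι ℂ E)
    {s : Set ι} {Q X : E →L[ℂ] E} (hQ : IsSelfAdjoint Q) (hQs : ∀ i ∈ s, Q (b i) = b i)
    (hQsc : ∀ i ∉ s, Q (b i) = 0) (hQXQ : Q * X * Q = 0) (hQXQ' : (1 - Q) * X * (1 - Q) = 0)
    {i j : ι} (hX : ⟪b j, X (b i)⟫_ℂ ≠ 0) : i ∈ s ↔ j ∉ s := by
  by_contra h
  by_cases hi : i ∈ s
  · exact hX ((mul_mul_eq_zero_iff_of_basis b hQ hQs hQsc X).1 hQXQ i hi j (by tauto))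
  · exact hX ((one_sub_mul_mul_eq_zero_iff_of_basis b hQ hQs hQsc X).1 hQXQ' i hi j (by tauto))

variable [CompleteSpace E] {H : E →L[ℂ] E}

theorem inner_commutator_apply_of_eigen (hH : IsSelfAdjoint H) {ν μ : ℝ} {φ ψ : E}
    (hφ : H φ = (ν : ℂ) • φ) (hψ : H ψ = (μ : ℂ) • ψ) (X : E →L[ℂ] E) :
    ⟪φ, (H * X - X * H) ψ⟫_ℂ = (ν - μ) * ⟪φ, X ψ⟫_ℂ := by
  have hsymm : ⟪φ, H (X ψ)⟫_ℂ = ⟪H φ, X ψ⟫_ℂ := (hH.isSymmetric φ (X ψ)).symm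
  rw [sub_apply, mul_apply_eq_comp, mul_apply_eq_comp, inner_sub_right, hsymm, hφ, hψ, map_smul,
    inner_smul_left, inner_smul_right, Complex.conj_ofReal, sub_mul]

theorem inner_exp_smul_apply_of_eigen (hH : IsSelfAdjoint H) {ν : ℝ} {φ : E}
    (hφ : H φ = (ν : ℂ) • φ) (c : ℂ) (y : E) :
    ⟪φ, NormedSpace.exp (c • H) y⟫_ℂ = Complex.exp (c * ν) * ⟪φ, y⟫_ℂ := by
  have hstar : star (NormedSpace.exp (c • H)) = NormedSpace.exp ((starRingEnd ℂ c) • H) := by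
    rw [NormedSpace.star_exp, star_smul, hH.star_eq]
    rfl
  rw [← adjoint_inner_left, ← star_eq_adjoint, hstar,
    exp_apply_of_apply_eq_smul (by rw [smul_apply, hφ, smul_smul]), inner_smul_left,
    ← Complex.exp_conj]
  simp [Complex.conj_ofReal]

end SelfAdjoint

section Heisenberg

variable {H : ℋ →L[ℂ] ℋ}

theorem continuous_heis (A : ℋ →L[ℂ] ℋ) : Continuous (heis H A) := by
  let +nondep : NormedAlgebra ℚ (ℋ →L[ℂ] ℋ) := .restrictScalars ℚ ℂ (ℋ →L[ℂ] ℋ)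
  unfold heis
  fun_prop

theorem norm_heis (hH : IsSelfAdjoint H) (A : ℋ →L[ℂ] ℋ) (u : ℝ) : ‖heis H A u‖ = ‖A‖ := by
  let +nondep : NormedAlgebra ℚ (ℋ →L[ℂ] ℋ) := .restrictScalars ℚ ℂ (ℋ →L[ℂ] ℋ)
  have hunitary : ∀ c : ℂ, c ∈ skewAdjoint ℂ → NormedSpace.exp (c • H) ∈ unitary (ℋ →L[ℂ] ℋ) :=
    fun c hc => NormedSpace.exp_mem_unitary_of_mem_skewAdjoint (hH.smul_mem_skewAdjoint hc)
  rw [heis, CStarRing.norm_mul_mem_unitary _ (hunitary _ ?_),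
    CStarRing.norm_mem_unitary_mul _ (hunitary _ ?_)]
  all_goals simp [skewAdjoint.mem_iff, Complex.conj_ofReal]

theorem integrable_smul_heis {W : ℝ → ℝ} (hW : Integrable W) (hH : IsSelfAdjoint H)
    (A : ℋ →L[ℂ] ℋ) : Integrable fun u => W u • heis H A u :=
  hW.smul_of_top_left (memLp_top_of_bound (continuous_heis A).aestronglyMeasurable ‖A‖
    (.of_forall fun u => (norm_heis hH A u).le))

theorem inner_heis_apply_of_eigen (hH : IsSelfAdjoint H) {ν μ : ℝ} {φ ψ : ℋ}
    (hφ : H φ = (ν : ℂ) • φ) (hψ : H ψ = (μ : ℂ) • ψ) (A : ℋ →L[ℂ] ℋ) (u : ℝ) :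
    ⟪φ, heis H A u ψ⟫_ℂ = Complex.exp (Complex.I * ↑(ν - μ) * u) * ⟪φ, A ψ⟫_ℂ := by
  have hψu : ((-Complex.I * u) • H) ψ = (-Complex.I * u * μ) • ψ := by
    rw [smul_apply, hψ, smul_smul]
  rw [heis, mul_apply_eq_comp, mul_apply_eq_comp, inner_exp_smul_apply_of_eigen hH hφ,
    exp_apply_of_apply_eq_smul hψu, map_smul, inner_smul_right, ← mul_assoc, ← Complex.exp_add]
  congr 2
  push_cast
  ring

def fourierWeight (W : ℝ → ℝ) (ω : ℝ) : ℂ :=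
  ∫ u : ℝ, (W u : ℂ) * Complex.exp (Complex.I * ω * u)

theorem inner_invLiou_apply_of_eigen {W : ℝ → ℝ} (hW : Integrable W) (hH : IsSelfAdjoint H)
    {ν μ : ℝ} {φ ψ : ℋ} (hφ : H φ = (ν : ℂ) • φ) (hψ : H ψ = (μ : ℂ) • ψ) (A : ℋ →L[ℂ] ℋ) :
    ⟪φ, invLiou W H A ψ⟫_ℂ = fourierWeight W (ν - μ) * ⟪φ, A ψ⟫_ℂ := by
  have hint := integrable_smul_heis hW hH A
  rw [invLiou, integral_apply hint, ← integral_inner (hint.apply_continuousLinearMap ψ),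
    fourierWeight, ← integral_mul_const]
  congr 1 with u
  rw [smul_apply, inner_smul_right_eq_smul, inner_heis_apply_of_eigen hH hφ hψ, Complex.real_smul]
  ring

theorem IsW.ofReal_mul_fourierWeight {W : ℝ → ℝ} {g gt : ℝ} (hW : IsW W g gt) {ω : ℝ}
    (hω : g ≤ |ω|) (hω0 : ω ≠ 0) : (ω : ℂ) * fourierWeight W ω = Complex.I := by
  rw [fourierWeight, hW.2.2.2.1 ω hω, mul_div_cancel₀ _ (Complex.ofReal_ne_zero.mpr hω0)]

theorem commutator_invLiou_eq_I_smul {W : ℝ → ℝ} {g gt : ℝ} (hW : IsW W g gt)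
    (hH : IsSelfAdjoint H) {ι : Type*} [Fintype ι] (b : OrthonormalBasis ι ℂ ℋ) {e : ι → ℝ}
    (hb : ∀ i, H (b i) = (e i : ℂ) • b i) {A : ℋ →L[ℂ] ℋ}
    (hA : ∀ i j, ⟪b j, A (b i)⟫_ℂ ≠ 0 → e j ≠ e i ∧ g ≤ |e j - e i|) :
    H * invLiou W H A - invLiou W H A * H = Complex.I • A := by
  refine ext_inner_basis b.toBasis fun i j => ?_
  simp only [OrthonormalBasis.coe_toBasis]
  rw [inner_commutator_apply_of_eigen hH (hb j) (hb i),
    inner_invLiou_apply_of_eigen hW.2.1 hH (hb j) (hb i), smul_apply, inner_smul_right,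
    ← mul_assoc, ← Complex.ofReal_sub]
  by_cases hA0 : ⟪b j, A (b i)⟫_ℂ = 0
  · rw [hA0, mul_zero, mul_zero]
  · obtain ⟨hne, hgap⟩ := hA i j hA0
    rw [hW.ofReal_mul_fourierWeight hgap (sub_ne_zero.mpr hne)]

end Heisenberg

theorem stmt7_general (H : ℋ →L[ℂ] ℋ) (hH : IsSelfAdjoint H)
    (σs : Set ℂ)
    (g gt : ℝ)
    (hgap : ∀ μ ∈ σs, ∀ ν ∈ spectrum ℂ H, ν ∉ σs → g ≤ ‖μ - ν‖)
    (P : ℋ →L[ℂ] ℋ) (hPsa : IsSelfAdjoint P)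
    (hPin : ∀ μ ∈ σs, ∀ ψ : ℋ, H ψ = μ • ψ → P ψ = ψ)
    (hPout : ∀ μ ∈ spectrum ℂ H, μ ∉ σs → ∀ ψ : ℋ, H ψ = μ • ψ → P ψ = 0)
    (W : ℝ → ℝ) (hW : IsW W g gt) :
    (∀ A : ℋ →L[ℂ] ℋ,
      -- A off-diagonal, i.e. A = P A P^⊥ + P^⊥ A P :
      P * A * P = 0 → (1 - P) * A * (1 - P) = 0 →
        P * invLiou W H A * P = 0 ∧ (1 - P) * invLiou W H A * (1 - P) = 0 ∧
        H * invLiou W H A - invLiou W H A * H = Complex.I • A) ∧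
    ((∀ μ ∈ σs, ∀ ν ∈ σs, ‖μ - ν‖ ≤ gt) →
      ∀ A : ℋ →L[ℂ] ℋ, P * invLiou W H A * P = 0) := by
  set b := hH.isSymmetric.eigenvectorBasis rfl
  set e := hH.isSymmetric.eigenvalues rfl
  have hb : ∀ i, H (b i) = (e i : ℂ) • b i := hH.isSymmetric.apply_eigenvectorBasis rfl
  have hspec : ∀ i, (e i : ℂ) ∈ spectrum ℂ H := fun i =>
    spectrum_eq (f := H) ▸ (hH.isSymmetric.hasEigenvalue_eigenvalues rfl i).mem_spectrum
  set s := {i | (e i : ℂ) ∈ σs}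
  have hPb : ∀ i ∈ s, P (b i) = b i := fun i hi => hPin _ hi _ (hb i)
  have hPb' : ∀ i ∉ s, P (b i) = 0 := fun i hi => hPout _ (hspec i) hi _ (hb i)
  have hdiag := mul_mul_eq_zero_iff_of_basis b.toBasis hPsa hPb hPb'
  have hoff := one_sub_mul_mul_eq_zero_iff_of_basis b.toBasis hPsa hPb hPb'
  simp only [OrthonormalBasis.coe_toBasis] at hdiag hoff
  have hmat : ∀ A i j, ⟪b j, invLiou W H A (b i)⟫_ℂ =
      fourierWeight W (e j - e i) * ⟪b j, A (b i)⟫_ℂ := fun A i j =>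
    inner_invLiou_apply_of_eigen hW.2.1 hH (hb j) (hb i) A
  have hdist : ∀ i j, ‖(e i : ℂ) - e j‖ = |e i - e j| := fun i j => by
    rw [← Complex.ofReal_sub, Complex.norm_real, Real.norm_eq_abs]
  refine ⟨fun A hPAP hQAQ => ⟨?_, ?_, ?_⟩, fun hdiam A => ?_⟩
  · exact (hdiag _).2 fun i hi j hj => by rw [hmat, (hdiag A).1 hPAP i hi j hj, mul_zero]
  · exact (hoff _).2 fun i hi j hj => by rw [hmat, (hoff A).1 hQAQ i hi j hj, mul_zero]
  · refine commutator_invLiou_eq_I_smul hW hH b hb fun i j hA => ?_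
    have hij := mem_iff_notMem_of_inner_ne_zero b.toBasis hPsa hPb hPb' hPAP hQAQ hA
    refine ⟨fun h => by simp [s, h] at hij, ?_⟩
    by_cases hi : i ∈ s
    · rw [abs_sub_comm, ← hdist]
      exact hgap _ hi _ (hspec j) (hij.mp hi)
    · rw [← hdist]
      exact hgap _ (by tauto) _ (hspec i) hi
  · refine (hdiag _).2 fun i hi j hj => ?_
    rw [hmat, fourierWeight, hW.2.2.2.2 _ (hdist j i ▸ hdiam _ hj _ hi), zero_mul]

/-- Lemma on the quasi-local inverse of the Liouvillian: for a self-adjoint `H`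
on a finite-dimensional Hilbert space, a part `σ_*` of its spectrum at distance `≥ g` from
the rest, with spectral projection `P`, and `g > g̃ > 0`:
(i) `𝓘` maps off-diagonal operators to off-diagonal operators and inverts `-i·ad_H` there;
(ii) if `diam σ_* ≤ g̃`, then `P 𝓘(A) P = 0` for every `A`. -/
theorem stmt7 (H : ℋ →L[ℂ] ℋ) (hH : IsSelfAdjoint H)
    (σs : Set ℂ) (hσs : σs ⊆ spectrum ℂ H)
    (g gt : ℝ) (hgt : 0 < gt) (hg : gt < g)
    (hgap : ∀ μ ∈ σs, ∀ ν ∈ spectrum ℂ H, ν ∉ σs → g ≤ ‖μ - ν‖)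
    (P : ℋ →L[ℂ] ℋ) (hPsa : IsSelfAdjoint P) (hPidem : P * P = P)
    (hPin : ∀ μ ∈ σs, ∀ ψ : ℋ, H ψ = μ • ψ → P ψ = ψ)
    (hPout : ∀ μ ∈ spectrum ℂ H, μ ∉ σs → ∀ ψ : ℋ, H ψ = μ • ψ → P ψ = 0)
    (W : ℝ → ℝ) (hW : IsW W g gt) :
    (∀ A : ℋ →L[ℂ] ℋ,
      -- A off-diagonal, i.e. A = P A P^⊥ + P^⊥ A P :
      P * A * P = 0 → (1 - P) * A * (1 - P) = 0 →
        P * invLiou W H A * P = 0 ∧ (1 - P) * invLiou W H A * (1 - P) = 0 ∧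
        H * invLiou W H A - invLiou W H A * H = Complex.I • A) ∧
    ((∀ μ ∈ σs, ∀ ν ∈ σs, ‖μ - ν‖ ≤ gt) →
      ∀ A : ℋ →L[ℂ] ℋ, P * invLiou W H A * P = 0) :=
  stmt7_general H hH σs g gt hgap P hPsa hPin hPout W hW
end
end

section
/- Let ℋ be a finite-dimensional complex Hilbert space, Z a finite set, s ∈ ℕ, and let a_{j,x} ∈ ℒ(ℋ) for (j,x) ∈ {1,…,s}×Z satisfy the canonical anticommutation relations. Let 𝔑_Z := Σ_{x∈Z} Σ_{j=1}^s a*_{j,x} a_{j,x}, let v : Z → ℝ, and let V := Σ_{x∈Z} v(x) Σ_{j=1}^s a*_{j,x} a_{j,x}. Then for every operator O in the subalgebra of ℒ(ℋ) generated by {1, a_{j,x}, a*_{j,x} : x ∈ Z, 1 ≤ j ≤ s} which commutes with 𝔑_Z: ‖[O, V]‖ ≤ (s·|Z|/2) · (max_{x∈Z} v(x) − min_{x∈Z} v(x)) · ‖O‖. -/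
open ContinuousLinearMap

noncomputable section

set_option maxHeartbeats 1000000 in
set_option synthInstance.maxHeartbeats 200000 in
/-- for a CAR family `a_{j,x}` on a finite-dimensional Hilbert space, indexed by
`{1,…,s} × Z`, a potential `v : Z → ℝ`, `V = Σ_x v(x) Σ_j a*_{j,x} a_{j,x}`, and any operator
`O` in the algebra generated by the `a`'s which commutes with the number operator `𝔑_Z`:
`‖[O,V]‖ ≤ (s·|Z|/2)·(max v − min v)·‖O‖`. -/
theorem stmt11 {ℋ : Type*} [NormedAddCommGroup ℋ] [InnerProductSpace ℂ ℋ]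
    [FiniteDimensional ℂ ℋ]
    (Z : Type*) [Fintype Z] [DecidableEq Z] [Nonempty Z] (s : ℕ)
    (a : Fin s → Z → ℋ →L[ℂ] ℋ)
    (car_mix : ∀ (i j : Fin s) (x y : Z),
      a i x * adjoint (a j y) + adjoint (a j y) * a i x = if i = j ∧ x = y then 1 else 0)
    (car_ann : ∀ (i j : Fin s) (x y : Z), a i x * a j y + a j y * a i x = 0)
    (v : Z → ℝ)
    (O : ℋ →L[ℂ] ℋ)
    (hOalg : O ∈ Algebra.adjoin ℂ
      {B : ℋ →L[ℂ] ℋ | ∃ (j : Fin s) (x : Z), B = a j x ∨ B = adjoint (a j x)})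
    (hOnum : O * (∑ x : Z, ∑ j : Fin s, adjoint (a j x) * a j x)
      = (∑ x : Z, ∑ j : Fin s, adjoint (a j x) * a j x) * O) :
    ‖O * (∑ x : Z, v x • ∑ j : Fin s, adjoint (a j x) * a j x)
        - (∑ x : Z, v x • ∑ j : Fin s, adjoint (a j x) * a j x) * O‖
      ≤ ((s : ℝ) * (Fintype.card Z : ℝ) / 2)
          * (Finset.univ.sup' Finset.univ_nonempty v - Finset.univ.inf' Finset.univ_nonempty v)
          * ‖O‖ := by
  
  classical
  set M : ℝ := Finset.univ.sup' Finset.univ_nonempty v with hM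
  set m : ℝ := Finset.univ.inf' Finset.univ_nonempty v with hm
  set c : ℝ := (M + m) / 2 with hc
  set n : Fin s → Z → ℋ →L[ℂ] ℋ := fun j x => adjoint (a j x) * a j x with hndef
  -- key norm bound : ‖n j x - 1/2‖ ≤ 1/2
  have hPle : ∀ (j : Fin s) (x : Z), ‖n j x - (1/2 : ℝ) • (1 : ℋ →L[ℂ] ℋ)‖ ≤ 1/2 := by
    intro j x
    have hsq : a j x * a j x = 0 := by
      have h2 : (2 : ℂ) • (a j x * a j x) = 0 := by rw [two_smul]; exact car_ann j j x x
      simpa using h2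
    have hmix : a j x * adjoint (a j x) = 1 - n j x := by
      have h := car_mix j j x x
      simp at h
      rw [hndef]; linear_combination (norm := noncomm_ring) h
    have hidem : n j x * n j x = n j x := by
      have h1 : n j x * n j x = adjoint (a j x) * (a j x * adjoint (a j x)) * a j x := by
        rw [hndef]; noncomm_ring
      rw [h1, hmix, hndef]; noncomm_ring [hsq]
    have hsa : star (n j x) = n j x := by
      rw [hndef]
      simp only [star_mul, star_eq_adjoint, adjoint_adjoint]
    set P : ℋ →L[ℂ] ℋ := n j x - (1/2 : ℝ) • 1 with hP
    have hPsa : star P = P := by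
      rw [hP, star_sub, hsa, star_smul]; simp
    have hPP : P * P = (1/4 : ℝ) • 1 := by
      rw [hP]
      simp only [sub_mul, mul_sub, smul_mul_assoc, mul_smul_comm, mul_one, one_mul, hidem,
        smul_smul]
      module
    have hnorm : ‖P‖ * ‖P‖ ≤ 1/4 := by
      rw [← CStarRing.norm_star_mul_self, hPsa, hPP]
      have h1 : ‖(1 : ℋ →L[ℂ] ℋ)‖ ≤ 1 := by
        rw [ContinuousLinearMap.one_def]; exact norm_id_le
      calc ‖(1/4 : ℝ) • (1 : ℋ →L[ℂ] ℋ)‖ ≤ ‖(1/4 : ℝ)‖ * ‖(1 : ℋ →L[ℂ] ℋ)‖ :=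
            norm_smul_le ((1:ℝ)/4) (1 : ℋ →L[ℂ] ℋ)
        _ ≤ (1/4) * 1 := by
            apply mul_le_mul _ h1 (norm_nonneg _) (by norm_num)
            simp
        _ = 1/4 := by ring
    nlinarith [norm_nonneg P]
  set T : ℋ →L[ℂ] ℋ :=
    ∑ x : Z, ∑ j : Fin s, (v x - c) • (n j x - (1/2 : ℝ) • 1) with hT
  -- commutator identity
  have hNcomm : (∑ x : Z, ∑ j : Fin s, (O * n j x - n j x * O)) = 0 := by
    have : (∑ x : Z, ∑ j : Fin s, (O * n j x - n j x * O))
        = O * (∑ x : Z, ∑ j : Fin s, n j x) - (∑ x : Z, ∑ j : Fin s, n j x) * O := by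
      simp [Finset.mul_sum, Finset.sum_mul, Finset.sum_sub_distrib]
    rw [this, hndef, sub_eq_zero]
    exact hOnum

  have key : O * (∑ x : Z, v x • ∑ j : Fin s, adjoint (a j x) * a j x)
        - (∑ x : Z, v x • ∑ j : Fin s, adjoint (a j x) * a j x) * O
      = O * T - T * O := by
    have e1 : O * T - T * O = ∑ x : Z, ∑ j : Fin s, (v x - c) • (O * n j x - n j x * O) := by
      rw [hT]
      simp only [Finset.mul_sum, Finset.sum_mul, ← Finset.sum_sub_distrib]
      refine Finset.sum_congr rfl fun x _ => Finset.sum_congr rfl fun j _ => ?_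
      simp only [mul_sub, sub_mul, mul_smul_comm, smul_mul_assoc, smul_sub, mul_one, one_mul]
      abel
    have e2 : O * (∑ x : Z, v x • ∑ j : Fin s, adjoint (a j x) * a j x)
        - (∑ x : Z, v x • ∑ j : Fin s, adjoint (a j x) * a j x) * O
        = ∑ x : Z, ∑ j : Fin s, v x • (O * n j x - n j x * O) := by
      simp only [Finset.mul_sum, Finset.sum_mul, ← Finset.sum_sub_distrib, Finset.smul_sum,
        mul_smul_comm, smul_mul_assoc, smul_sub, hndef]
    rw [e1, e2]
    have e3 : ∑ x : Z, ∑ j : Fin s, (v x - c) • (O * n j x - n j x * O)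
        = (∑ x : Z, ∑ j : Fin s, v x • (O * n j x - n j x * O))
          - (∑ x : Z, ∑ j : Fin s, c • (O * n j x - n j x * O)) := by
      simp only [sub_smul, Finset.sum_sub_distrib]
    have e4 : (∑ x : Z, ∑ j : Fin s, c • (O * n j x - n j x * O))
        = c • (∑ x : Z, ∑ j : Fin s, (O * n j x - n j x * O)) := by
      simp only [Finset.smul_sum]
    rw [e3, e4, hNcomm, smul_zero, sub_zero]
  -- norm bound on T
  have hmM : m ≤ M := by
    obtain ⟨x0⟩ := ‹Nonempty Z›
    exact le_trans (Finset.inf'_le v (Finset.mem_univ x0)) (Finset.le_sup' v (Finset.mem_univ x0))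
  have hvx : ∀ x : Z, |v x - c| ≤ (M - m) / 2 := by
    intro x
    have h1 : v x ≤ M := Finset.le_sup' v (Finset.mem_univ x)
    have h2 : m ≤ v x := Finset.inf'_le v (Finset.mem_univ x)
    rw [abs_le]; constructor <;> [linarith; linarith]
  have hTnorm : ‖T‖ ≤ (s : ℝ) * (Fintype.card Z : ℝ) * (M - m) / 4 := by
    calc ‖T‖ ≤ ∑ x : Z, ‖∑ j : Fin s, (v x - c) • (n j x - (1/2 : ℝ) • 1)‖ :=
          norm_sum_le _ _
      _ ≤ ∑ x : Z, ∑ j : Fin s, ‖(v x - c) • (n j x - (1/2 : ℝ) • 1)‖ := by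
          gcongr with x _; exact norm_sum_le _ _
      _ ≤ ∑ x : Z, ∑ j : Fin s, ((M - m) / 2 * (1/2)) := by
          refine Finset.sum_le_sum fun x _ => Finset.sum_le_sum fun j _ => ?_
          calc ‖(v x - c) • (n j x - (1/2 : ℝ) • 1)‖
              ≤ ‖v x - c‖ * ‖n j x - (1/2 : ℝ) • (1 : ℋ →L[ℂ] ℋ)‖ :=
                norm_smul_le (v x - c) (n j x - (1/2 : ℝ) • (1 : ℋ →L[ℂ] ℋ))
            _ ≤ (M - m) / 2 * (1/2) := by
                apply mul_le_mul _ (hPle j x) (norm_nonneg _) (by linarith)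
                rw [Real.norm_eq_abs]; exact hvx x
      _ = (s : ℝ) * (Fintype.card Z : ℝ) * (M - m) / 4 := by
          simp [Finset.sum_const, Finset.card_univ]
          ring
  -- conclude
  rw [key]
  calc ‖O * T - T * O‖ ≤ ‖O * T‖ + ‖T * O‖ := norm_sub_le _ _
    _ ≤ ‖O‖ * ‖T‖ + ‖T‖ * ‖O‖ := add_le_add (norm_mul_le _ _) (norm_mul_le _ _)
    _ = 2 * ‖T‖ * ‖O‖ := by ring
    _ ≤ 2 * ((s : ℝ) * (Fintype.card Z : ℝ) * (M - m) / 4) * ‖O‖ := by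
        gcongr
    _ = ((s : ℝ) * (Fintype.card Z : ℝ) / 2) * (M - m) * ‖O‖ := by ring
end
end

section
/- Let d ∈ ℕ, 0 ≤ d_c ≤ d, and let L, L' be localization vectors whose constraint vectors ℓ, ℓ' ∈ {0,1}^d satisfy ℓ_j ℓ'_j = 0 for all j. Then for all ζ, ξ ∈ 𝒮 there exists a constant C, depending only on ζ, ξ and d, such that for every even M ≥ 2, the lattice Λ = Λ(M), and every ε ∈ (0,1]: Σ_{x∈Λ} ζ(ε·dist(x,L')) · ξ(dist(x,L)) ≤ C · ε^{−|ℓ'|} · M^{d−|ℓ|−|ℓ'|}. -/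
open scoped BigOperators

noncomputable section

namespace Lattice

variable (d dc : ℕ)

/-- The centred box `Λ(M) = {−M/2+1,…,M/2}^d ⊂ ℤ^d`. -/
def box (M : ℕ) : Finset (Fin d → ℤ) :=
  Fintype.piFinset fun _ => Finset.Icc (-(M : ℤ) / 2 + 1) ((M : ℤ) / 2)

/-- The representative of `a mod M` in `{−M/2+1,…,M/2}`. -/
def modRep (M : ℕ) (a : ℤ) : ℤ := (a + (M : ℤ) / 2 - 1) % (M : ℤ) - ((M : ℤ) / 2 - 1)

/-- The difference vector `x −_Λ y`; the first `dc` directions are closed (periodic). -/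
def latDiff (M : ℕ) (x y : Fin d → ℤ) : Fin d → ℤ :=
  fun j => if (j : ℕ) < dc then modRep M (x j - y j) else x j - y j

/-- The `ℓ¹`-distance `d^Λ(x,y)` on the box with the first `dc` directions closed. -/
def latDist (M : ℕ) (x y : Fin d → ℤ) : ℕ :=
  ∑ j, (latDiff d dc M x y j).natAbs

/-- A localization vector: a set of constrained directions `ℓ ∈ {0,1}^d` together with a
centre point `l^Λ ∈ Λ(M)` for each (even) `M`. -/
structure LocVec where
  ell : Fin d → Bool
  center : ℕ → Fin d → ℤ
  center_mem : ∀ M : ℕ, Even M → 2 ≤ M → center M ∈ box d M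

/-- The number `|ℓ|` of constrained directions. -/
def LocVec.nconstr {d : ℕ} (L : LocVec d) : ℕ :=
  (Finset.univ.filter fun j => L.ell j = true).card

/-- `dist(x, L) = Σ_j |(x −_Λ l^Λ)_j| ℓ_j`. -/
def distLoc (M : ℕ) (L : LocVec d) (x : Fin d → ℤ) : ℕ :=
  ∑ j, if L.ell j then (latDiff d dc M x (L.center M) j).natAbs else 0

/-- The class `𝒮` of weight functions: positive, bounded, non-increasing,
log-superadditive, decaying faster than any inverse power. -/
def InS (ζ : ℝ → ℝ) : Prop :=
  (∀ r : ℝ, 0 ≤ r → 0 < ζ r) ∧ (∃ C : ℝ, ∀ r : ℝ, 0 ≤ r → ζ r ≤ C) ∧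
  (∀ r t : ℝ, 0 ≤ r → r ≤ t → ζ t ≤ ζ r) ∧
  (∀ r t : ℝ, 0 ≤ r → 0 ≤ t → ζ r * ζ t ≤ ζ (r + t)) ∧
  (∀ n : ℕ, ∃ C : ℝ, ∀ r : ℝ, 0 ≤ r → r ^ n * ζ r ≤ C)

/-- `F(r) = (1+r)^{−(d+1)}`. -/
def Fd (r : ℝ) : ℝ := 1 / (1 + r) ^ (d + 1)

/-- `F_ζ(r) = ζ(r)·(1+r)^{−(d+1)}`. -/
def Fzeta (ζ : ℝ → ℝ) (r : ℝ) : ℝ := ζ r / (1 + r) ^ (d + 1)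

/-- The weighted distance `d^Λ_L(x,y) = d^Λ(x,y) + dist(x,L) + dist(y,L)`. -/
def dLamL (M : ℕ) (L : LocVec d) (x y : Fin d → ℤ) : ℝ :=
  (latDist d dc M x y : ℝ) + (distLoc d dc M L x : ℝ) + (distLoc d dc M L y : ℝ)

/-- The weighted distance `d^Λ_{L^ε}(x,y) = d^Λ(x,y) + ε·dist(x,L) + ε·dist(y,L)`. -/
def dLamLeps (M : ℕ) (L : LocVec d) (ε : ℝ) (x y : Fin d → ℤ) : ℝ :=
  (latDist d dc M x y : ℝ) + ε * (distLoc d dc M L x : ℝ) + ε * (distLoc d dc M L y : ℝ)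

/-- `‖F‖_Γ = sup_{x∈ℤ^d} Σ_{y∈ℤ^d} F(d(x,y))`, with `d` the `ℓ¹`-distance on `ℤ^d`. -/
def normFGamma : ℝ :=
  ⨆ x : Fin d → ℤ, ∑' y : Fin d → ℤ, Fd d ((∑ j, (x j - y j).natAbs : ℕ) : ℝ)

end Lattice
open Lattice

section Helpers
open Finset

/-- Telescoping bound: `∑_{m<N} (1+εm)^{-2} ≤ 2/ε` for `0<ε≤1`. -/
lemma tele_bound {ε : ℝ} (hε0 : 0 < ε) (hε1 : ε ≤ 1) (N : ℕ) :
    ∑ m ∈ Finset.range N, ((1 + ε * m)⁻¹) ^ 2 ≤ 2 / ε := by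
  set g : ℕ → ℝ := fun m => (1 + ε * m)⁻¹ with hg
  have hpos : ∀ m : ℕ, (0:ℝ) < 1 + ε * m := fun m => by positivity
  have key : ∀ m : ℕ, ((1 + ε * m)⁻¹) ^ 2 ≤ (2 / ε) * (g m - g (m + 1)) := by
    intro m
    have hA := hpos m
    have hB := hpos (m + 1)
    have hBc : ((m + 1 : ℕ) : ℝ) = (m : ℝ) + 1 := by push_cast; ring
    have hsub : g m - g (m + 1) = ε / ((1 + ε * m) * (1 + ε * ((m : ℝ) + 1))) := by
      rw [hg]
      simp only [hBc] at hB ⊢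
      field_simp
      ring
    rw [hsub]
    have h2 : (2 / ε) * (ε / ((1 + ε * m) * (1 + ε * ((m : ℝ) + 1)))) =
        2 / ((1 + ε * m) * (1 + ε * ((m : ℝ) + 1))) := by
      field_simp
    rw [h2]
    rw [inv_eq_one_div, div_pow, div_le_div_iff₀ (by positivity) (by positivity)]
    have hBc2 : (0:ℝ) < 1 + ε * ((m:ℝ) + 1) := by positivity
    have hmn : (0:ℝ) ≤ ε * m := by positivity
    nlinarith
  calc ∑ m ∈ Finset.range N, ((1 + ε * m)⁻¹) ^ 2
      ≤ ∑ m ∈ Finset.range N, (2 / ε) * (g m - g (m + 1)) :=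
        Finset.sum_le_sum fun m _ => key m
    _ = (2 / ε) * (g 0 - g N) := by rw [← Finset.mul_sum, Finset.sum_range_sub' g]
    _ ≤ 2 / ε := by
        have h0 : g 0 = 1 := by simp [hg]
        have hN : 0 ≤ g N := le_of_lt (by simp only [hg]; positivity)
        have h2 : g 0 - g N ≤ 1 := by rw [h0]; linarith
        have h3 : (0:ℝ) ≤ 2 / ε := by positivity
        nlinarith

/-- Summing `f ∘ natAbs ∘ δ` over a set on which `δ` is injective. -/
lemma sum_natAbs_comp_le {S : Finset ℤ} {δ : ℤ → ℤ} (hinj : Set.InjOn δ ↑S)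
    (f : ℕ → ℝ) (hf : ∀ m, 0 ≤ f m) {B : ℝ} (hB : 0 ≤ B)
    (hbnd : ∀ N : ℕ, ∑ m ∈ Finset.range N, f m ≤ B) :
    ∑ t ∈ S, f (δ t).natAbs ≤ 2 * B := by
  classical
  rw [Finset.sum_comp (fun m => f m) (fun t => (δ t).natAbs)]
  set T := S.image fun t => (δ t).natAbs with hT
  have hcard : ∀ b ∈ T, (S.filter fun a => (δ a).natAbs = b).card ≤ 2 := by
    intro b _
    have hsub : (S.filter fun a => (δ a).natAbs = b)
        ⊆ (S.filter fun a => δ a = (b : ℤ)) ∪ (S.filter fun a => δ a = -(b : ℤ)) := by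
      intro a ha
      simp only [Finset.mem_filter, Finset.mem_union] at ha ⊢
      rcases Int.natAbs_eq_iff.mp ha.2 with h | h
      · exact Or.inl ⟨ha.1, h⟩
      · exact Or.inr ⟨ha.1, h⟩
    have h1 : ∀ c : ℤ, (S.filter fun a => δ a = c).card ≤ 1 := by
      intro c
      refine Finset.card_le_one.mpr ?_
      intro a ha b' hb'
      simp only [Finset.mem_filter] at ha hb'
      exact hinj ha.1 hb'.1 (ha.2.trans hb'.2.symm)
    calc (S.filter fun a => (δ a).natAbs = b).card
        ≤ ((S.filter fun a => δ a = (b:ℤ)) ∪ (S.filter fun a => δ a = -(b:ℤ))).card :=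
          Finset.card_le_card hsub
      _ ≤ (S.filter fun a => δ a = (b:ℤ)).card + (S.filter fun a => δ a = -(b:ℤ)).card :=
          Finset.card_union_le _ _
      _ ≤ 2 := by have := h1 (b:ℤ); have := h1 (-(b:ℤ)); omega
  calc ∑ b ∈ T, (S.filter fun a => (δ a).natAbs = b).card • f b
      ≤ ∑ b ∈ T, 2 * f b := by
        refine Finset.sum_le_sum fun b hb => ?_
        rw [nsmul_eq_mul]
        exact mul_le_mul_of_nonneg_right (by exact_mod_cast hcard b hb) (hf b)
    _ = 2 * ∑ b ∈ T, f b := by rw [Finset.mul_sum]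
    _ ≤ 2 * B := by
        refine mul_le_mul_of_nonneg_left ?_ (by norm_num)
        calc ∑ b ∈ T, f b ≤ ∑ b ∈ Finset.range (T.sup id + 1), f b := by
              refine Finset.sum_le_sum_of_subset_of_nonneg ?_ fun b _ _ => hf b
              intro b hb
              exact Finset.mem_range.mpr (Nat.lt_succ_of_le (Finset.le_sup (f := id) hb))
          _ ≤ B := hbnd _

lemma pow_mul_le {n : ℕ} {ψ : ℝ → ℝ} {C0 Cn : ℝ}
    (hψ : ∀ r : ℝ, 0 ≤ r → 0 ≤ ψ r)
    (h0 : ∀ r : ℝ, 0 ≤ r → ψ r ≤ C0) (hn : ∀ r : ℝ, 0 ≤ r → r ^ n * ψ r ≤ Cn)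
    {r : ℝ} (hr : 0 ≤ r) : ψ r * (1 + r) ^ n ≤ 2 ^ n * (C0 + Cn) := by
  have h2n : (0:ℝ) ≤ 2 ^ n := by positivity
  have hrn : (0:ℝ) ≤ r ^ n := by positivity
  have h1 : (1 + r) ^ n ≤ 2 ^ n * (1 + r ^ n) := by
    rcases le_total r 1 with h | h
    · calc (1 + r) ^ n ≤ 2 ^ n := pow_le_pow_left₀ (by linarith) (by linarith) n
        _ ≤ 2 ^ n * (1 + r ^ n) := by nlinarith
    · calc (1 + r) ^ n ≤ (2 * r) ^ n := pow_le_pow_left₀ (by linarith) (by linarith) n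
        _ = 2 ^ n * r ^ n := mul_pow 2 r n
        _ ≤ 2 ^ n * (1 + r ^ n) := by nlinarith
  calc ψ r * (1 + r) ^ n ≤ ψ r * (2 ^ n * (1 + r ^ n)) :=
        mul_le_mul_of_nonneg_left h1 (hψ r hr)
    _ = 2 ^ n * (ψ r + r ^ n * ψ r) := by ring
    _ ≤ 2 ^ n * (C0 + Cn) :=
        mul_le_mul_of_nonneg_left (add_le_add (h0 r hr) (hn r hr)) h2n

lemma auxA {d : ℕ} {ψ : ℝ → ℝ} (hψpos : ∀ r : ℝ, 0 ≤ r → 0 < ψ r) {D : ℝ}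
    (hD : ∀ r : ℝ, 0 ≤ r → ψ r * (1 + r) ^ (2 * d) ≤ D)
    {η : ℝ} (hη : 0 < η) (b : Fin d → Bool) (a : Fin d → ℝ) (ha : ∀ j, 0 ≤ a j) :
    ψ (η * ∑ j, (if b j then a j else 0)) ≤
      D * ∏ j, (if b j then ((1 + η * a j)⁻¹) ^ 2 else 1) := by
  set s : ℝ := ∑ j, (if b j then a j else 0) with hs
  have hs0 : 0 ≤ s := Finset.sum_nonneg fun j _ => by
    split_ifs
    exacts [ha j, le_refl 0]
  have hηs : 0 ≤ η * s := by positivity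
  have hfacpos : ∀ j : Fin d, (0:ℝ) < (if b j then (1 + η * a j) ^ 2 else 1) := fun j => by
    split_ifs with h
    · have := ha j; positivity
    · norm_num
  have hP : (0:ℝ) < ∏ j, (if b j then (1 + η * a j) ^ 2 else 1) :=
    Finset.prod_pos fun j _ => hfacpos j
  have hprodle : ∏ j, (if b j then (1 + η * a j) ^ 2 else 1) ≤ (1 + η * s) ^ (2 * d) := by
    have h1 : ∀ j : Fin d, (if b j then (1 + η * a j) ^ 2 else 1) ≤ (1 + η * s) ^ 2 := by
      intro j
      split_ifs with h
      · have haj : a j ≤ s := by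
          have h2 : (if b j then a j else 0) ≤ s := by
            rw [hs]
            refine Finset.single_le_sum (f := fun i => if b i then a i else 0)
              (fun i _ => ?_) (Finset.mem_univ j)
            split_ifs
            exacts [ha i, le_refl 0]
          rwa [if_pos h] at h2
        have h1p : (0:ℝ) ≤ 1 + η * a j := by have := ha j; positivity
        refine pow_le_pow_left₀ h1p ?_ 2
        have := mul_le_mul_of_nonneg_left haj hη.le
        linarith
      · have : (1:ℝ) ≤ 1 + η * s := by linarith
        calc (1:ℝ) = 1 ^ 2 := by norm_num
          _ ≤ (1 + η * s) ^ 2 := pow_le_pow_left₀ (by norm_num) this 2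
    calc ∏ j, (if b j then (1 + η * a j) ^ 2 else 1)
        ≤ ∏ _j : Fin d, (1 + η * s) ^ 2 :=
          Finset.prod_le_prod (fun j _ => (hfacpos j).le) (fun j _ => h1 j)
      _ = ((1 + η * s) ^ 2) ^ d := by rw [Finset.prod_const, Finset.card_univ, Fintype.card_fin]
      _ = (1 + η * s) ^ (2 * d) := by rw [← pow_mul]
  have key : ψ (η * s) * ∏ j, (if b j then (1 + η * a j) ^ 2 else 1) ≤ D := by
    calc ψ (η * s) * ∏ j, (if b j then (1 + η * a j) ^ 2 else 1)
        ≤ ψ (η * s) * (1 + η * s) ^ (2 * d) :=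
          mul_le_mul_of_nonneg_left hprodle (hψpos _ hηs).le
      _ ≤ D := hD _ hηs
  have hdiv : ψ (η * s) ≤ D / ∏ j, (if b j then (1 + η * a j) ^ 2 else 1) :=
    (le_div_iff₀ hP).mpr key
  refine hdiv.trans (le_of_eq ?_)
  rw [div_eq_mul_inv, ← Finset.prod_inv_distrib]
  refine congrArg (D * ·) (Finset.prod_congr rfl fun j _ => ?_)
  split_ifs
  · rw [← inv_pow]
  · norm_num

lemma modRep_injOn {M : ℕ} (hM : 2 ≤ M) (c : ℤ) :
    Set.InjOn (fun t => Lattice.modRep M (t - c))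
      ↑(Finset.Icc (-(M : ℤ) / 2 + 1) ((M : ℤ) / 2)) := by
  intro s hs t ht h
  simp only [Finset.coe_Icc, Set.mem_Icc] at hs ht
  simp only [Lattice.modRep] at h
  have h2 : (s - c + (M : ℤ) / 2 - 1) % M = (t - c + (M : ℤ) / 2 - 1) % M := by linarith
  have h3 : (M : ℤ) ∣ (t - c + (M : ℤ) / 2 - 1) - (s - c + (M : ℤ) / 2 - 1) :=
    Int.ModEq.dvd h2
  have h4 : (M : ℤ) ∣ t - s := by
    obtain ⟨q, hq⟩ := h3
    exact ⟨q, by linarith⟩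
  have hMz : (2 : ℤ) ≤ (M : ℤ) := by exact_mod_cast hM
  have hkey : (M : ℤ) / 2 - ((-(M:ℤ)) / 2 + 1) ≤ (M : ℤ) - 1 := by omega
  obtain ⟨q, hq⟩ := h4
  have hq0 : q = 0 := by
    rcases lt_trichotomy q 0 with h' | h' | h'
    · have hq1 : q ≤ -1 := by omega
      have : (M : ℤ) * q ≤ (M : ℤ) * (-1) := by
        refine mul_le_mul_of_nonneg_left hq1 (by linarith)
      linarith [hs.1, hs.2, ht.1, ht.2]
    · exact h'
    · have hq1 : 1 ≤ q := by omega
      have : (M : ℤ) * 1 ≤ (M : ℤ) * q := by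
        refine mul_le_mul_of_nonneg_left hq1 (by linarith)
      linarith [hs.1, hs.2, ht.1, ht.2]
  rw [hq0, mul_zero] at hq
  linarith

lemma coord_bound {M : ℕ} {η : ℝ} (hη0 : 0 < η) (hη1 : η ≤ 1)
    {δ : ℤ → ℤ} (hinj : Set.InjOn δ ↑(Finset.Icc (-(M : ℤ) / 2 + 1) ((M : ℤ) / 2))) :
    ∑ t ∈ Finset.Icc (-(M : ℤ) / 2 + 1) ((M : ℤ) / 2),
      ((1 + η * ((δ t).natAbs : ℝ))⁻¹) ^ 2 ≤ 4 / η := by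
  have h := sum_natAbs_comp_le hinj (fun m : ℕ => ((1 + η * m)⁻¹) ^ 2)
    (fun m => by positivity) (B := 2 / η) (by positivity) (fun N => tele_bound hη0 hη1 N)
  calc ∑ t ∈ Finset.Icc (-(M : ℤ) / 2 + 1) ((M : ℤ) / 2),
        ((1 + η * ((δ t).natAbs : ℝ))⁻¹) ^ 2 ≤ 2 * (2 / η) := h
    _ = 4 / η := by ring

end Helpers


/-- for localization vectors `L, L'` with disjoint constraint directions
(`ℓ·ℓ' = 0`) and `ζ, ξ ∈ 𝒮`, there is a constant `C` (depending only on `ζ, ξ, d`) with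
`Σ_{x∈Λ} ζ(ε·dist(x,L')) ξ(dist(x,L)) ≤ C ε^{−|ℓ'|} M^{d−|ℓ|−|ℓ'|}`
for all even `M ≥ 2` and all `ε ∈ (0,1]`. -/
theorem stmt15 (d dc : ℕ) (hdc : dc ≤ d) (L L' : Lattice.LocVec d)
    (hdisj : ∀ j : Fin d, ¬(L.ell j = true ∧ L'.ell j = true))
    (ζ ξ : ℝ → ℝ) (hζ : InS ζ) (hξ : InS ξ) :
    ∃ C : ℝ, ∀ M : ℕ, Even M → 2 ≤ M → ∀ ε : ℝ, ε ∈ Set.Ioc (0 : ℝ) 1 →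
      ∑ x ∈ box d M, ζ (ε * (distLoc d dc M L' x : ℝ)) * ξ ((distLoc d dc M L x : ℝ))
        ≤ C * ε⁻¹ ^ L'.nconstr * (M : ℝ) ^ (d - L.nconstr - L'.nconstr) := by
  classical
  obtain ⟨hζpos, ⟨Cζ0, hζ0⟩, hζmono, hζsup, hζdec⟩ := hζ
  obtain ⟨hξpos, ⟨Cξ0, hξ0⟩, hξmono, hξsup, hξdec⟩ := hξ
  obtain ⟨Cζn, hζn⟩ := hζdec (2 * d)
  obtain ⟨Cξn, hξn⟩ := hξdec (2 * d)
  set Dζ : ℝ := 2 ^ (2 * d) * (Cζ0 + Cζn) with hDζdef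
  set Dξ : ℝ := 2 ^ (2 * d) * (Cξ0 + Cξn) with hDξdef
  have hDζ : ∀ r : ℝ, 0 ≤ r → ζ r * (1 + r) ^ (2 * d) ≤ Dζ := fun r hr =>
    pow_mul_le (fun r hr => (hζpos r hr).le) hζ0 hζn hr
  have hDξ : ∀ r : ℝ, 0 ≤ r → ξ r * (1 + r) ^ (2 * d) ≤ Dξ := fun r hr =>
    pow_mul_le (fun r hr => (hξpos r hr).le) hξ0 hξn hr
  have hDζ0 : 0 ≤ Dζ := le_trans (mul_nonneg (hζpos 0 le_rfl).le (by positivity)) (hDζ 0 le_rfl)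
  have hDξ0 : 0 ≤ Dξ := le_trans (mul_nonneg (hξpos 0 le_rfl).le (by positivity)) (hDξ 0 le_rfl)
  refine ⟨Dζ * Dξ * 4 ^ d, ?_⟩
  intro M hME hM2 ε hε
  obtain ⟨hε0, hε1⟩ := hε
  set S : Finset ℤ := Finset.Icc (-(M : ℤ) / 2 + 1) ((M : ℤ) / 2) with hS
  have hcardS : (S.card : ℝ) = (M : ℝ) := by
    have : S.card = M := by
      rw [hS, Int.card_Icc]
      obtain ⟨k, hk⟩ := hME
      omega
    exact_mod_cast this
  -- per-coordinate difference functions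
  set a' : Fin d → ℤ → ℕ := fun j t =>
    (if (j : ℕ) < dc then modRep M (t - L'.center M j) else t - L'.center M j).natAbs with ha'
  set a : Fin d → ℤ → ℕ := fun j t =>
    (if (j : ℕ) < dc then modRep M (t - L.center M j) else t - L.center M j).natAbs with ha
  -- the per-coordinate weight
  set h : Fin d → ℤ → ℝ := fun j t =>
    (if L'.ell j then ((1 + ε * (a' j t : ℝ))⁻¹) ^ 2 else 1) *
    (if L.ell j then ((1 + (a j t : ℝ))⁻¹) ^ 2 else 1) with hh
  have hMz : (2 : ℤ) ≤ (M : ℤ) := by exact_mod_cast hM2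
  -- injectivity of each coordinate difference
  have hinjGen : ∀ (P : Prop) [Decidable P] (c : ℤ),
      Set.InjOn (fun t : ℤ => if P then modRep M (t - c) else t - c) ↑S := by
    intro P _ c
    by_cases hP : P
    · simp only [if_pos hP]
      exact hS ▸ modRep_injOn hM2 c
    · simp only [if_neg hP]
      exact fun x _ y _ hxy => sub_left_inj.mp hxy
  -- cast of distLoc as a sum
  have hcast' : ∀ x : Fin d → ℤ, ((distLoc d dc M L' x : ℕ) : ℝ) =
      ∑ j, (if L'.ell j then ((a' j (x j) : ℕ) : ℝ) else 0) := by
    intro x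
    rw [distLoc]
    push_cast
    rfl
  have hcast : ∀ x : Fin d → ℤ, ((distLoc d dc M L x : ℕ) : ℝ) =
      ∑ j, (if L.ell j then ((a j (x j) : ℕ) : ℝ) else 0) := by
    intro x
    rw [distLoc]
    push_cast
    rfl
  -- pointwise bounds
  have hptζ : ∀ x : Fin d → ℤ, ζ (ε * ((distLoc d dc M L' x : ℕ) : ℝ)) ≤
      Dζ * ∏ j, (if L'.ell j then ((1 + ε * (a' j (x j) : ℝ))⁻¹) ^ 2 else 1) := by
    intro x
    rw [hcast' x]
    exact auxA hζpos hDζ hε0 L'.ell (fun j => ((a' j (x j) : ℕ) : ℝ)) (fun j => by positivity)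
  have hptξ : ∀ x : Fin d → ℤ, ξ ((distLoc d dc M L x : ℕ) : ℝ) ≤
      Dξ * ∏ j, (if L.ell j then ((1 + (a j (x j) : ℝ))⁻¹) ^ 2 else 1) := by
    intro x
    rw [hcast x]
    have := auxA hξpos hDξ one_pos L.ell (fun j => ((a j (x j) : ℕ) : ℝ)) (fun j => by positivity)
    simpa only [one_mul] using this
  -- exponent bookkeeping
  set e' : Fin d → ℕ := fun j => if L'.ell j then 1 else 0 with he'
  set e0 : Fin d → ℕ := fun j => if (L'.ell j || L.ell j) then 0 else 1 with he0
  have hsum_e' : ∑ j, e' j = L'.nconstr := by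
    rw [LocVec.nconstr, Finset.card_filter]
  have hsum_e : ∑ j, (if L.ell j then 1 else 0) = L.nconstr := by
    rw [LocVec.nconstr, Finset.card_filter]
  have hsum_total : ∑ j, e0 j + L.nconstr + L'.nconstr = d := by
    rw [← hsum_e', ← hsum_e, ← Finset.sum_add_distrib, ← Finset.sum_add_distrib]
    have : ∀ j : Fin d, e0 j + (if L.ell j then 1 else 0) + e' j = 1 := by
      intro j
      have hd := hdisj j
      simp only [he0, he']
      cases hL' : L'.ell j <;> cases hL : L.ell j
      · simp [hL, hL']
      · simp [hL, hL']
      · simp [hL, hL']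
      · exact absurd ⟨hL, hL'⟩ hd
    rw [Finset.sum_congr rfl fun j _ => this j]
    simp
  have hsum_e0 : ∑ j, e0 j = d - L.nconstr - L'.nconstr := by omega
  -- coordinate sum bounds
  have hcoord : ∀ j : Fin d, ∑ t ∈ S, h j t ≤
      (4 : ℝ) * ε⁻¹ ^ (e' j) * (M : ℝ) ^ (e0 j) := by
    intro j
    cases hL' : L'.ell j with
    | true =>
      have hL : L.ell j = false := by
        have := hdisj j
        cases hLv : L.ell j
        · rfl
        · exact absurd ⟨hLv, hL'⟩ this
      have hsum : ∑ t ∈ S, h j t =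
          ∑ t ∈ S, ((1 + ε * ((((fun t => if (j : ℕ) < dc then modRep M (t - L'.center M j)
            else t - L'.center M j) t).natAbs : ℕ)) : ℝ)⁻¹) ^ 2 := by
        refine Finset.sum_congr rfl fun t _ => ?_
        simp [hh, hL', hL, ha']
      rw [hsum]
      have hb := coord_bound hε0 hε1 (hS ▸ hinjGen ((j : ℕ) < dc) (L'.center M j))
      refine le_trans hb (le_of_eq ?_)
      simp [he', he0, hL', hL, div_eq_mul_inv]
    | false =>
      cases hL : L.ell j with
      | true =>
        have hsum : ∑ t ∈ S, h j t =
            ∑ t ∈ S, ((1 + (1:ℝ) * ((((fun t => if (j : ℕ) < dc then modRep M (t - L.center M j)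
              else t - L.center M j) t).natAbs : ℕ)) : ℝ)⁻¹) ^ 2 := by
          refine Finset.sum_congr rfl fun t _ => ?_
          simp [hh, hL', hL, ha]
        rw [hsum]
        have hb := coord_bound one_pos le_rfl (hS ▸ hinjGen ((j : ℕ) < dc) (L.center M j))
        refine le_trans hb (le_of_eq ?_)
        simp [he', he0, hL', hL]
      | false =>
        have h1 : ∀ t ∈ S, h j t = 1 := fun t _ => by simp [hh, hL', hL]
        rw [Finset.sum_congr rfl h1, Finset.sum_const, nsmul_eq_mul, mul_one, hcardS]
        have hM0 : (0:ℝ) ≤ (M : ℝ) := by positivity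
        have he'j : e' j = 0 := by simp [he', hL']
        have he0j : e0 j = 1 := by simp [he0, hL', hL]
        rw [he'j, he0j]
        simp only [pow_zero, pow_one, mul_one]
        linarith
  -- main chain
  have hbox : box d M = Fintype.piFinset (fun _ : Fin d => S) := by rw [hS]; rfl
  calc ∑ x ∈ box d M, ζ (ε * ((distLoc d dc M L' x : ℕ) : ℝ)) * ξ ((distLoc d dc M L x : ℕ) : ℝ)
      ≤ ∑ x ∈ box d M, (Dζ * Dξ) * ∏ j, h j (x j) := by
        refine Finset.sum_le_sum fun x _ => ?_
        have h1 := hptζ x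
        have h2 := hptξ x
        have hξ0' : 0 ≤ ξ ((distLoc d dc M L x : ℕ) : ℝ) := (hξpos _ (by positivity)).le
        have hA0 : 0 ≤ Dζ * ∏ j, (if L'.ell j then ((1 + ε * (a' j (x j) : ℝ))⁻¹) ^ 2 else 1) := by
          refine mul_nonneg hDζ0 (Finset.prod_nonneg fun j _ => ?_)
          split_ifs <;> positivity
        calc ζ (ε * ((distLoc d dc M L' x : ℕ) : ℝ)) * ξ ((distLoc d dc M L x : ℕ) : ℝ)
            ≤ (Dζ * ∏ j, (if L'.ell j then ((1 + ε * (a' j (x j) : ℝ))⁻¹) ^ 2 else 1)) *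
              (Dξ * ∏ j, (if L.ell j then ((1 + (a j (x j) : ℝ))⁻¹) ^ 2 else 1)) :=
              mul_le_mul h1 h2 hξ0' hA0
          _ = (Dζ * Dξ) * ∏ j, h j (x j) := by
              rw [hh]
              rw [Finset.prod_mul_distrib]
              ring
    _ = (Dζ * Dξ) * ∑ x ∈ box d M, ∏ j, h j (x j) := by rw [← Finset.mul_sum]
    _ = (Dζ * Dξ) * ∏ j, ∑ t ∈ S, h j t := by rw [hbox, ← Finset.prod_univ_sum]
    _ ≤ (Dζ * Dξ) * ∏ j, ((4 : ℝ) * ε⁻¹ ^ (e' j) * (M : ℝ) ^ (e0 j)) := by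
        refine mul_le_mul_of_nonneg_left ?_ (mul_nonneg hDζ0 hDξ0)
        refine Finset.prod_le_prod (fun j _ => Finset.sum_nonneg fun t _ => ?_)
          (fun j _ => hcoord j)
        rw [hh]
        refine mul_nonneg ?_ ?_ <;> (split_ifs <;> positivity)
    _ = (Dζ * Dξ) * ((4 : ℝ) ^ d * ε⁻¹ ^ L'.nconstr * (M : ℝ) ^ (d - L.nconstr - L'.nconstr)) := by
        rw [Finset.prod_mul_distrib, Finset.prod_mul_distrib, Finset.prod_const,
          Finset.card_univ, Fintype.card_fin, Finset.prod_pow_eq_pow_sum,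
          Finset.prod_pow_eq_pow_sum, hsum_e', hsum_e0]
    _ = Dζ * Dξ * 4 ^ d * ε⁻¹ ^ L'.nconstr * (M : ℝ) ^ (d - L.nconstr - L'.nconstr) := by ring
end
end
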